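/- Orlicz chord Brunn-Minkowski inequality: if K, L are star bodies in R^n, 0 ≤ i < n, and φ ∈ Φ₂, then 1 ≥ φ((B_i(K)/B_i(K +̌_φ L))^{1/(n-i)}, (B_i(L)/B_i(K +̌_φ L))^{1/(n-i)}). If φ is strictly convex, equality holds if and only if K and L have similar chord. -/

import Mathlib

open MeasureTheory Metric Filter Set

noncomputable section

/-- A star body in `ℝⁿ`: a compact set, star-shaped about the origin, whose radial
function (recorded on the unit sphere) is positive and continuous. -/
structure StarBody (n : ℕ) where
  carrier : Set (EuclideanSpace ℝ (Fin n))
  radial : sphere (0 : EuclideanSpace ℝ (Fin n)) 1 → ℝ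
  radial_pos : ∀ u, 0 < radial u
  radial_continuous : Continuous radial
  isCompact : IsCompact carrier
  mem_iff : ∀ x, x ∈ carrier ↔ x = 0 ∨
    ∃ (u : sphere (0 : EuclideanSpace ℝ (Fin n)) 1) (c : ℝ),
      0 ≤ c ∧ c ≤ radial u ∧ x = c • (u : EuclideanSpace ℝ (Fin n))

/-- The half chord `d(K,u) = (ρ(K,u) + ρ(K,-u))/2` of a star body in direction `u`. -/
def StarBody.chord {n : ℕ} (K : StarBody n) (u : sphere (0 : EuclideanSpace ℝ (Fin n)) 1) : ℝ :=
  (K.radial u + K.radial (-u)) / 2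

/-- Spherical (surface-type) measure on the unit sphere of `ℝⁿ`. -/
def sphereMeasure (n : ℕ) : Measure (sphere (0 : EuclideanSpace ℝ (Fin n)) 1) :=
  (volume : Measure (EuclideanSpace ℝ (Fin n))).toSphere

/-- The chord integral `B_i(K) = (1/n) ∫_{S^{n-1}} d(K,u)^{n-i} dS(u)`. -/
def chordIntegral (n i : ℕ) (K : StarBody n) : ℝ :=
  (1 / (n : ℝ)) * ∫ u, K.chord u ^ ((n : ℝ) - i) ∂(sphereMeasure n)

/-- `K` and `L` have similar chord: `d(K,·) = λ d(L,·)` for some `λ > 0`. -/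
def SimilarChord {n : ℕ} (K L : StarBody n) : Prop :=
  ∃ lam : ℝ, 0 < lam ∧ ∀ u, K.chord u = lam * L.chord u

/-- The class `Φ₂`: convex functions `φ : [0,∞)² → (0,∞]`, strictly decreasing in each
variable, with `φ(0,0) = ∞` (encoded as a blow-up at `(0,0)`) and
`φ(∞,1) = φ(1,∞) = 1` (encoded as limits). -/
structure OrliczPhi2 where
  toFun : ℝ → ℝ → ℝ
  pos : ∀ x > (0 : ℝ), ∀ y > (0 : ℝ), 0 < toFun x y
  convexOn : ConvexOn ℝ ((Set.Ioi 0) ×ˢ (Set.Ioi (0 : ℝ)))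
    (fun p : ℝ × ℝ => toFun p.1 p.2)
  strictAnti_left : ∀ y > (0 : ℝ), StrictAntiOn (fun x => toFun x y) (Set.Ioi 0)
  strictAnti_right : ∀ x > (0 : ℝ), StrictAntiOn (fun y => toFun x y) (Set.Ioi 0)
  tendsto_zero : Tendsto (fun p : ℝ × ℝ => toFun p.1 p.2)
    (nhdsWithin (0, 0) ((Set.Ioi 0) ×ˢ (Set.Ioi 0))) atTop
  tendsto_one_left : Tendsto (fun t => toFun t 1) atTop (nhds 1)
  tendsto_one_right : Tendsto (fun t => toFun 1 t) atTop (nhds 1)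

/-!
Weight the sphere by `d(M,·)^(n-i)`. For the ratios `f₁ = d(K,·)/d(M,·)` and
`f₂ = d(L,·)/d(M,·)` we have `φ(f₁, f₂) = 1` pointwise, and the weighted average of `f₁^(n-i)`
is `B_i(K)/B_i(M)` (similarly for `L`). By the power mean inequality the averages `m₁, m₂` of
`f₁, f₂` are bounded by the `(n-i)`-th power means, so monotonicity of `φ` and Jensen's inequality
give `φ(power means) ≤ φ(m₁, m₂) ≤ average of φ(f₁, f₂) = 1`.

If equality holds and `φ` is strictly convex, the strict Jensen inequality forces `(f₁, f₂)` to be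
constant, hence `d(K,·)` and `d(L,·)` are both multiples of `d(M,·)`. Conversely, if
`d(K,·) = λ d(L,·)`, then `φ(λ f₂, f₂) = 1` everywhere, and since `t ↦ φ(λt, t)` is strictly
decreasing, `f₂` is constant, which makes all power means explicit.
-/

open scoped ENNReal

theorem IsCompact.exists_Icc_subset_of_ordConnected {α : Type*}
    [ConditionallyCompleteLinearOrder α] [TopologicalSpace α] [OrderTopology α] {K s : Set α}
    (hK : IsCompact K) (hne : K.Nonempty) (hs : s.OrdConnected) (hKs : K ⊆ s) :
    ∃ a b, K ⊆ Icc a b ∧ Icc a b ⊆ s :=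
  ⟨sInf K, sSup K, fun _ hx => ⟨csInf_le hK.bddBelow hx, le_csSup hK.bddAbove hx⟩,
    hs.out (hKs (hK.sInf_mem hne)) (hKs (hK.sSup_mem hne))⟩

/- Mathlib's Jensen inequality wants a closed convex domain: a compact range inside a product of
intervals lies in a closed box inside that product. -/
theorem Continuous.exists_isClosed_convex_subset_prod {X : Type*} [TopologicalSpace X]
    [CompactSpace X] {s₁ s₂ : Set ℝ} (hs₁ : s₁.OrdConnected) (hs₂ : s₂.OrdConnected)
    {f : X → ℝ × ℝ} (hf : Continuous f) (hfs : ∀ x, f x ∈ s₁ ×ˢ s₂) :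
    ∃ t : Set (ℝ × ℝ), IsClosed t ∧ Convex ℝ t ∧ (∀ x, f x ∈ t) ∧ t ⊆ s₁ ×ˢ s₂ := by
  rcases isEmpty_or_nonempty X with _ | _
  · exact ⟨∅, isClosed_empty, convex_empty, isEmptyElim, empty_subset _⟩
  obtain ⟨a₁, b₁, h₁, h₁s⟩ :=
    ((isCompact_range hf).image continuous_fst).exists_Icc_subset_of_ordConnected
      ((range_nonempty f).image _) hs₁ (by rintro _ ⟨_, ⟨x, rfl⟩, rfl⟩; exact (hfs x).1)
  obtain ⟨a₂, b₂, h₂, h₂s⟩ :=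
    ((isCompact_range hf).image continuous_snd).exists_Icc_subset_of_ordConnected
      ((range_nonempty f).image _) hs₂ (by rintro _ ⟨_, ⟨x, rfl⟩, rfl⟩; exact (hfs x).2)
  exact ⟨Icc a₁ b₁ ×ˢ Icc a₂ b₂, isClosed_Icc.prod isClosed_Icc,
    (convex_Icc _ _).prod (convex_Icc _ _),
    fun x => ⟨h₁ ⟨f x, mem_range_self x, rfl⟩, h₂ ⟨f x, mem_range_self x, rfl⟩⟩, prod_mono h₁s h₂s⟩

theorem MeasureTheory.Measure.isOpenPosMeasure_withDensity {α : Type*} [TopologicalSpace α]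
    [MeasurableSpace α] {μ : Measure α} [μ.IsOpenPosMeasure] {w : α → ℝ≥0∞}
    (hw : AEMeasurable w μ) (hw0 : ∀ x, w x ≠ 0) : (μ.withDensity w).IsOpenPosMeasure :=
  ⟨fun U hU hne => by
    rw [Ne, withDensity_apply_eq_zero' hw]
    simpa [hw0] using hU.measure_ne_zero μ hne⟩

theorem average_div_rpow_withDensity_rpow {α : Type*} [MeasurableSpace α] {μ : Measure α}
    {p : ℝ} {a b : α → ℝ} (ha : ∀ x, 0 ≤ a x) (hb : ∀ x, 0 < b x)
    (hbi : Integrable (fun x => b x ^ p) μ) :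
    ⨍ x, (a x / b x) ^ p ∂μ.withDensity (fun x => ENNReal.ofReal (b x ^ p)) =
      (∫ x, a x ^ p ∂μ) / ∫ x, b x ^ p ∂μ := by
  have hbp : ∀ x, 0 ≤ b x ^ p := fun x => Real.rpow_nonneg (hb x).le p
  rw [average_eq, measureReal_def, withDensity_apply _ MeasurableSet.univ, Measure.restrict_univ,
    ← ofReal_integral_eq_lintegral_ofReal hbi (.of_forall hbp),
    ENNReal.toReal_ofReal (integral_nonneg hbp),
    integral_withDensity_eq_integral_toReal_smul₀ hbi.aemeasurable.ennreal_ofReal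
      (.of_forall fun _ => ENNReal.ofReal_lt_top), smul_eq_mul, inv_mul_eq_div]
  congr 1
  refine integral_congr_ae (.of_forall fun x => ?_)
  simp only [smul_eq_mul, ENNReal.toReal_ofReal (hbp x), Real.div_rpow (ha x) (hb x).le,
    mul_div_cancel₀ _ (Real.rpow_pos_of_pos (hb x) p).ne']

section CompactSpace

variable {X : Type*} [TopologicalSpace X] [CompactSpace X] [MeasurableSpace X]
  [OpensMeasurableSpace X] {μ : Measure X} [IsFiniteMeasure μ]

theorem Continuous.integrable_of_compactSpace {E : Type*} [NormedAddCommGroup E] {f : X → E}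
    (hf : Continuous f) : Integrable f μ :=
  hf.integrable_of_hasCompactSupport (HasCompactSupport.of_compactSpace f)

theorem ConvexOn.average_mem_epigraph_of_continuous [NeZero μ] {s₁ s₂ : Set ℝ}
    (hs₁ : s₁.OrdConnected) (hs₂ : s₂.OrdConnected) {g : ℝ × ℝ → ℝ}
    (hg : ConvexOn ℝ (s₁ ×ˢ s₂) g) (hgc : ContinuousOn g (s₁ ×ˢ s₂)) {f : X → ℝ × ℝ}
    (hf : Continuous f) (hfs : ∀ x, f x ∈ s₁ ×ˢ s₂) :
    ⨍ x, f x ∂μ ∈ s₁ ×ˢ s₂ ∧ g (⨍ x, f x ∂μ) ≤ ⨍ x, g (f x) ∂μ := by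
  obtain ⟨t, htc, htv, hft, hts⟩ := hf.exists_isClosed_convex_subset_prod hs₁ hs₂ hfs
  have := (hg.subset hts htv).average_mem_epigraph (hgc.mono hts) htc (.of_forall hft)
    (hf.integrable_of_compactSpace (μ := μ)) (hgc.comp_continuous hf hfs).integrable_of_compactSpace
  exact ⟨hts this.1, this.2⟩

theorem StrictConvexOn.eq_const_or_map_average_lt_of_continuous [μ.IsOpenPosMeasure]
    {s₁ s₂ : Set ℝ} (hs₁ : s₁.OrdConnected) (hs₂ : s₂.OrdConnected) {g : ℝ × ℝ → ℝ}
    (hg : StrictConvexOn ℝ (s₁ ×ˢ s₂) g) (hgc : ContinuousOn g (s₁ ×ˢ s₂)) {f : X → ℝ × ℝ}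
    (hf : Continuous f) (hfs : ∀ x, f x ∈ s₁ ×ˢ s₂) :
    f = Function.const X (⨍ x, f x ∂μ) ∨ g (⨍ x, f x ∂μ) < ⨍ x, g (f x) ∂μ := by
  obtain ⟨t, htc, htv, hft, hts⟩ := hf.exists_isClosed_convex_subset_prod hs₁ hs₂ hfs
  exact ((hg.subset hts htv).ae_eq_const_or_map_average_lt (hgc.mono hts) htc (.of_forall hft)
    hf.integrable_of_compactSpace (hgc.comp_continuous hf hfs).integrable_of_compactSpace).imp_left
    (hf.ae_eq_iff_eq μ continuous_const).1

theorem average_le_rpow_average_rpow [NeZero μ] {p : ℝ} (hp : 1 ≤ p) {f : X → ℝ}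
    (hf : Continuous f) (hf0 : ∀ x, 0 ≤ f x) :
    ⨍ x, f x ∂μ ≤ (⨍ x, f x ^ p ∂μ) ^ (1 / p) := by
  have hp0 : 0 < p := by linarith
  have hcont : Continuous fun t : ℝ => t ^ p := continuous_id.rpow_const fun _ => Or.inr hp0.le
  have hJensen : (⨍ x, f x ∂μ) ^ p ≤ ⨍ x, f x ^ p ∂μ :=
    (convexOn_rpow hp).map_average_le hcont.continuousOn isClosed_Ici (.of_forall hf0)
      hf.integrable_of_compactSpace (hcont.comp hf).integrable_of_compactSpace
  have hm : 0 ≤ ⨍ x, f x ∂μ := (convex_Ici 0).average_mem isClosed_Ici (.of_forall hf0)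
    (hf.integrable_of_compactSpace (μ := μ))
  calc ⨍ x, f x ∂μ = ((⨍ x, f x ∂μ) ^ p) ^ (1 / p) := by
        rw [one_div, Real.rpow_rpow_inv hm hp0.ne']
    _ ≤ (⨍ x, f x ^ p ∂μ) ^ (1 / p) := by gcongr

end CompactSpace

namespace OrliczPhi2

variable (φ : OrliczPhi2)

theorem continuousOn : ContinuousOn (fun q : ℝ × ℝ => φ.toFun q.1 q.2) (Ioi 0 ×ˢ Ioi 0) :=
  φ.convexOn.continuousOn (isOpen_Ioi.prod isOpen_Ioi)

theorem toFun_le_toFun {a a' b b' : ℝ} (ha : 0 < a) (hb : 0 < b) (haa' : a ≤ a') (hbb' : b ≤ b') :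
    φ.toFun a' b' ≤ φ.toFun a b :=
  calc φ.toFun a' b' ≤ φ.toFun a b' :=
        (φ.strictAnti_left b' (hb.trans_le hbb')).antitoneOn ha (ha.trans_le haa') haa'
    _ ≤ φ.toFun a b := (φ.strictAnti_right a ha).antitoneOn hb (hb.trans_le hbb') hbb'

theorem strictAntiOn_ray {c : ℝ} (hc : 0 < c) :
    StrictAntiOn (fun t => φ.toFun (c * t) t) (Ioi 0) := fun s hs t ht hst =>
  calc φ.toFun (c * t) t < φ.toFun (c * s) t :=
        φ.strictAnti_left t ht (mul_pos hc hs) (mul_pos hc ht) (by gcongr)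
    _ < φ.toFun (c * s) s := φ.strictAnti_right _ (mul_pos hc hs) hs ht hst

section Average

variable {X : Type*} [MeasurableSpace X] {μ : Measure X} [IsFiniteMeasure μ] [NeZero μ]
  {f₁ f₂ : X → ℝ} {p : ℝ}

theorem toFun_rpow_average_eq_one_of_eq_mul (hp : p ≠ 0) (hf₂0 : ∀ x, 0 < f₂ x)
    (hφ : ∀ x, φ.toFun (f₁ x) (f₂ x) = 1) {c : ℝ} (hc : 0 < c) (h : ∀ x, f₁ x = c * f₂ x) :
    φ.toFun ((⨍ x, f₁ x ^ p ∂μ) ^ (1 / p)) ((⨍ x, f₂ x ^ p ∂μ) ^ (1 / p)) = 1 := by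
  obtain ⟨x₀⟩ := Measure.nonempty_of_neZero μ
  have hf₂ : ∀ x, f₂ x = f₂ x₀ := fun x => (φ.strictAntiOn_ray hc).injOn (hf₂0 x) (hf₂0 x₀) <| by
    simp only [← h, hφ]
  have hf₁ : ∀ x, f₁ x = f₁ x₀ := fun x => by rw [h, h x₀, hf₂ x]
  have hf₁0 : 0 ≤ f₁ x₀ := h x₀ ▸ (mul_pos hc (hf₂0 x₀)).le
  simp only [hf₁, hf₂, average_const, one_div, Real.rpow_rpow_inv hf₁0 hp,
    Real.rpow_rpow_inv (hf₂0 x₀).le hp, hφ]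

variable [TopologicalSpace X] [CompactSpace X] [OpensMeasurableSpace X]

theorem average_mem_and_toFun_average_le_one (hf₁ : Continuous f₁) (hf₂ : Continuous f₂)
    (hf₁0 : ∀ x, 0 < f₁ x) (hf₂0 : ∀ x, 0 < f₂ x) (hφ : ∀ x, φ.toFun (f₁ x) (f₂ x) = 1) :
    (⨍ x, f₁ x ∂μ, ⨍ x, f₂ x ∂μ) ∈ Ioi 0 ×ˢ Ioi 0 ∧
      φ.toFun (⨍ x, f₁ x ∂μ) (⨍ x, f₂ x ∂μ) ≤ 1 := by
  have := φ.convexOn.average_mem_epigraph_of_continuous (μ := μ) ordConnected_Ioi ordConnected_Ioi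
    φ.continuousOn (hf₁.prodMk hf₂) fun x => ⟨hf₁0 x, hf₂0 x⟩
  rw [average_pair hf₁.integrable_of_compactSpace hf₂.integrable_of_compactSpace] at this
  simpa [hφ] using this

theorem toFun_rpow_average_le_toFun_average (hp : 1 ≤ p) (hf₁ : Continuous f₁)
    (hf₂ : Continuous f₂) (hf₁0 : ∀ x, 0 ≤ f₁ x) (hf₂0 : ∀ x, 0 ≤ f₂ x)
    (hm₁ : 0 < ⨍ x, f₁ x ∂μ) (hm₂ : 0 < ⨍ x, f₂ x ∂μ) :
    φ.toFun ((⨍ x, f₁ x ^ p ∂μ) ^ (1 / p)) ((⨍ x, f₂ x ^ p ∂μ) ^ (1 / p)) ≤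
      φ.toFun (⨍ x, f₁ x ∂μ) (⨍ x, f₂ x ∂μ) :=
  φ.toFun_le_toFun hm₁ hm₂ (average_le_rpow_average_rpow hp hf₁ hf₁0)
    (average_le_rpow_average_rpow hp hf₂ hf₂0)

theorem toFun_rpow_average_le_one (hp : 1 ≤ p) (hf₁ : Continuous f₁) (hf₂ : Continuous f₂)
    (hf₁0 : ∀ x, 0 < f₁ x) (hf₂0 : ∀ x, 0 < f₂ x) (hφ : ∀ x, φ.toFun (f₁ x) (f₂ x) = 1) :
    φ.toFun ((⨍ x, f₁ x ^ p ∂μ) ^ (1 / p)) ((⨍ x, f₂ x ^ p ∂μ) ^ (1 / p)) ≤ 1 := by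
  obtain ⟨⟨hm₁, hm₂⟩, hle⟩ := φ.average_mem_and_toFun_average_le_one (μ := μ) hf₁ hf₂ hf₁0 hf₂0 hφ
  exact (φ.toFun_rpow_average_le_toFun_average hp hf₁ hf₂ (fun x => (hf₁0 x).le)
    (fun x => (hf₂0 x).le) hm₁ hm₂).trans hle

theorem exists_eq_mul_of_one_le_toFun_rpow_average [μ.IsOpenPosMeasure]
    (hφs : StrictConvexOn ℝ (Ioi 0 ×ˢ Ioi 0) fun q : ℝ × ℝ => φ.toFun q.1 q.2)
    (hp : 1 ≤ p) (hf₁ : Continuous f₁) (hf₂ : Continuous f₂)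
    (hf₁0 : ∀ x, 0 < f₁ x) (hf₂0 : ∀ x, 0 < f₂ x) (hφ : ∀ x, φ.toFun (f₁ x) (f₂ x) = 1)
    (h : 1 ≤ φ.toFun ((⨍ x, f₁ x ^ p ∂μ) ^ (1 / p)) ((⨍ x, f₂ x ^ p ∂μ) ^ (1 / p))) :
    ∃ c, 0 < c ∧ ∀ x, f₁ x = c * f₂ x := by
  obtain ⟨⟨hm₁, hm₂⟩, -⟩ := φ.average_mem_and_toFun_average_le_one (μ := μ) hf₁ hf₂ hf₁0 hf₂0 hφ
  have hle := φ.toFun_rpow_average_le_toFun_average hp hf₁ hf₂ (fun x => (hf₁0 x).le)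
    (fun x => (hf₂0 x).le) hm₁ hm₂
  have hcases := hφs.eq_const_or_map_average_lt_of_continuous (μ := μ) ordConnected_Ioi
    ordConnected_Ioi φ.continuousOn (hf₁.prodMk hf₂) fun x => ⟨hf₁0 x, hf₂0 x⟩
  rw [average_pair hf₁.integrable_of_compactSpace hf₂.integrable_of_compactSpace] at hcases
  rcases hcases with hconst | hlt
  · refine ⟨(⨍ x, f₁ x ∂μ) / ⨍ x, f₂ x ∂μ, div_pos hm₁ hm₂, fun x => ?_⟩
    obtain ⟨h₁, h₂⟩ := Prod.mk.inj (congrFun hconst x)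
    rw [h₁, h₂, div_mul_cancel₀ _ hm₂.ne']
  · simp only [hφ, average_const] at hlt
    linarith

theorem one_eq_toFun_rpow_average_iff [μ.IsOpenPosMeasure]
    (hφs : StrictConvexOn ℝ (Ioi 0 ×ˢ Ioi 0) fun q : ℝ × ℝ => φ.toFun q.1 q.2)
    (hp : 1 ≤ p) (hf₁ : Continuous f₁) (hf₂ : Continuous f₂)
    (hf₁0 : ∀ x, 0 < f₁ x) (hf₂0 : ∀ x, 0 < f₂ x) (hφ : ∀ x, φ.toFun (f₁ x) (f₂ x) = 1) :
    1 = φ.toFun ((⨍ x, f₁ x ^ p ∂μ) ^ (1 / p)) ((⨍ x, f₂ x ^ p ∂μ) ^ (1 / p)) ↔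
      ∃ c, 0 < c ∧ ∀ x, f₁ x = c * f₂ x :=
  ⟨fun h => φ.exists_eq_mul_of_one_le_toFun_rpow_average hφs hp hf₁ hf₂ hf₁0 hf₂0 hφ h.le,
    fun ⟨_, hc, h⟩ =>
      (φ.toFun_rpow_average_eq_one_of_eq_mul (by linarith) hf₂0 hφ hc h).symm⟩

end Average

end OrliczPhi2

instance (n : ℕ) : IsFiniteMeasure (sphereMeasure n) := by
  unfold sphereMeasure; infer_instance

instance (n : ℕ) : (sphereMeasure n).IsOpenPosMeasure := by
  unfold sphereMeasure; infer_instance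

namespace StarBody

variable {n : ℕ} (K : StarBody n)

theorem chord_pos (u : sphere (0 : EuclideanSpace ℝ (Fin n)) 1) : 0 < K.chord u := by
  have := K.radial_pos u
  have := K.radial_pos (-u)
  unfold chord
  positivity

theorem continuous_chord : Continuous K.chord :=
  (K.radial_continuous.add (K.radial_continuous.comp continuous_neg)).div_const 2

end StarBody

theorem similarChord_iff_exists_div {n : ℕ} (K L M : StarBody n) :
    SimilarChord K L ↔ ∃ c, 0 < c ∧ ∀ u, K.chord u / M.chord u = c * (L.chord u / M.chord u) := by
  simp only [SimilarChord, ← mul_div_assoc, div_left_inj' (M.chord_pos _).ne']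

theorem chordIntegral_div_chordIntegral {n : ℕ} (hn : n ≠ 0) (i : ℕ) (K M : StarBody n) :
    chordIntegral n i K / chordIntegral n i M =
      ⨍ u, (K.chord u / M.chord u) ^ ((n : ℝ) - i)
        ∂(sphereMeasure n).withDensity fun u => ENNReal.ofReal (M.chord u ^ ((n : ℝ) - i)) := by
  rw [average_div_rpow_withDensity_rpow (fun u => (K.chord_pos u).le) M.chord_pos
    (M.continuous_chord.rpow_const fun u => .inl (M.chord_pos u).ne').integrable_of_compactSpace,
    chordIntegral, chordIntegral, mul_div_mul_left _ _ (by simpa using hn)]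

/-- Orlicz chord Brunn–Minkowski inequality: with `M = K +̌_φ L`,
`1 ≥ φ((B_i(K)/B_i(M))^{1/(n−i)}, (B_i(L)/B_i(M))^{1/(n−i)})`, with equality (for
strictly convex `φ`) iff `K` and `L` have similar chord. -/
theorem orlicz_chord_brunn_minkowski {n i : ℕ} (hi : i < n) (φ : OrliczPhi2)
    (K L M : StarBody n)
    (hM : ∀ u, φ.toFun (K.chord u / M.chord u) (L.chord u / M.chord u) = 1) :
    1 ≥ φ.toFun ((chordIntegral n i K / chordIntegral n i M) ^ (1 / ((n : ℝ) - i)))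
        ((chordIntegral n i L / chordIntegral n i M) ^ (1 / ((n : ℝ) - i))) ∧
    (StrictConvexOn ℝ ((Set.Ioi 0) ×ˢ (Set.Ioi (0 : ℝ)))
        (fun p : ℝ × ℝ => φ.toFun p.1 p.2) →
      ((1 : ℝ) = φ.toFun ((chordIntegral n i K / chordIntegral n i M) ^ (1 / ((n : ℝ) - i)))
          ((chordIntegral n i L / chordIntegral n i M) ^ (1 / ((n : ℝ) - i))) ↔
        SimilarChord K L)) := by
  have hp : 1 ≤ (n : ℝ) - i := by
    have : (i : ℝ) + 1 ≤ n := by exact_mod_cast hi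
    linarith
  have : NeZero n := ⟨(i.zero_le.trans_lt hi).ne'⟩
  have : Nonempty (sphere (0 : EuclideanSpace ℝ (Fin n)) 1) :=
    (NormedSpace.sphere_nonempty.2 zero_le_one).to_subtype
  have hw : Continuous fun u => M.chord u ^ ((n : ℝ) - i) :=
    M.continuous_chord.rpow_const fun u => .inl (M.chord_pos u).ne'
  have :=
    isFiniteMeasure_withDensity_ofReal (hw.integrable_of_compactSpace (μ := sphereMeasure n)).2
  have := (sphereMeasure n).isOpenPosMeasure_withDensity hw.measurable.ennreal_ofReal.aemeasurable
    fun u => by simpa using Real.rpow_pos_of_pos (M.chord_pos u) _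
  have hcont (Q : StarBody n) : Continuous fun u => Q.chord u / M.chord u :=
    Q.continuous_chord.div M.continuous_chord fun u => (M.chord_pos u).ne'
  have hpos (Q : StarBody n) u : 0 < Q.chord u / M.chord u :=
    div_pos (Q.chord_pos u) (M.chord_pos u)
  rw [chordIntegral_div_chordIntegral (NeZero.ne n) i K M,
    chordIntegral_div_chordIntegral (NeZero.ne n) i L M, similarChord_iff_exists_div K L M]
  exact ⟨φ.toFun_rpow_average_le_one hp (hcont K) (hcont L) (hpos K) (hpos L) hM,
    fun hφs => φ.one_eq_toFun_rpow_average_iff hφs hp (hcont K) (hcont L) (hpos K) (hpos L) hM⟩
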